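/- Let α : [0,L₀] → ℝ^d be a unit-speed curve and let β₁ : [0,L₁] → ℝ^d and β₂ : [0,L₂] → ℝ^d be branching unit-speed curves with Lipschitz derivatives satisfying Assumptions 2 and 3, such that β₁(0) = β₂(0) = α(L₀) and β₁'(0) = β₂'(0) = α'(L₀). Then Δ(α⊕β₁, α⊕β₂) / (V(β₁,β₁) + V(β₂,β₂)) → 1 as σ_x, σ_t → 0 with σ_x ≍ σ_t; that is, for all k₁, k₂ > 0 and all ε > 0 there exists δ > 0 such that for every σ_x ∈ (0,δ) and every σ_t with k₁σ_x ≤ σ_t ≤ k₂σ_x one has |Δ(α⊕β₁, α⊕β₂) − V(β₁,β₁) − V(β₂,β₂)| ≤ ε · (V(β₁,β₁) + V(β₂,β₂)). -/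
import Mathlib


open Set MeasureTheory

/-- The Gaussian varifold inner product of two (parameterized) curves
`f, g : ℝ → ℝ^d` with respective derivatives `f', g'`, over parameter
intervals `[0, L₁]` and `[0, L₂]`, with spatial scale `σx` and tangential scale `σt`. -/
noncomputable def vprod (d : ℕ) (σx σt L₁ L₂ : ℝ)
    (f f' g g' : ℝ → EuclideanSpace ℝ (Fin d)) : ℝ :=
  ∫ s in (0:ℝ)..L₁, ∫ t in (0:ℝ)..L₂,
    Real.exp (-‖f s - g t‖ ^ 2 / σx ^ 2) * Real.exp (-‖f' s - g' t‖ ^ 2 / σt ^ 2)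

/-- A unit-speed curve in `ℝ^d`: a continuously differentiable map `γ : [0,L] → ℝ^d`
with `L > 0`, derivative `γ'`, and `‖γ'(s)‖ = 1` for all `s ∈ [0,L]`. -/
structure UnitSpeedCurve (d : ℕ) where
  L : ℝ
  γ : ℝ → EuclideanSpace ℝ (Fin d)
  γ' : ℝ → EuclideanSpace ℝ (Fin d)
  L_pos : 0 < L
  hasDeriv : ∀ s ∈ Set.Icc (0:ℝ) L, HasDerivWithinAt γ (γ' s) (Set.Icc 0 L) s
  contDeriv : ContinuousOn γ' (Set.Icc 0 L)
  unitSpeed : ∀ s ∈ Set.Icc (0:ℝ) L, ‖γ' s‖ = 1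

/-- The Gaussian varifold inner product `V(γ₁, γ₂)` of two unit-speed curves. -/
noncomputable def V {d : ℕ} (σx σt : ℝ) (c₁ c₂ : UnitSpeedCurve d) : ℝ :=
  vprod d σx σt c₁.L c₂.L c₁.γ c₁.γ' c₂.γ c₂.γ'

/-- Concatenation of two parameterized maps: `(f ⊕ g)(s) = f s` for `s ≤ L₀` and
`(f ⊕ g)(s) = g (s - L₀)` for `s > L₀`. Applied both to curves and to their derivatives. -/
noncomputable def concat {d : ℕ} (L₀ : ℝ) (f g : ℝ → EuclideanSpace ℝ (Fin d)) :
    ℝ → EuclideanSpace ℝ (Fin d) :=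
  fun s => if s ≤ L₀ then f s else g (s - L₀)

/-- The Gaussian varifold self inner product of the concatenation `α ⊕ β` of two
consecutive unit-speed curves, parameterized over `[0, α.L + β.L]`. -/
noncomputable def Vconcat {d : ℕ} (σx σt : ℝ) (a b c e : UnitSpeedCurve d) : ℝ :=
  vprod d σx σt (a.L + b.L) (c.L + e.L)
    (concat a.L a.γ b.γ) (concat a.L a.γ' b.γ')
    (concat c.L c.γ e.γ) (concat c.L c.γ' e.γ')

/-- The squared varifold distance between the concatenations `α ⊕ β₁` and `α ⊕ β₂`. -/
noncomputable def deltaConcat {d : ℕ} (σx σt : ℝ) (a b₁ b₂ : UnitSpeedCurve d) : ℝ :=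
  Vconcat σx σt a b₁ a b₁ + Vconcat σx σt a b₂ a b₂ - 2 * Vconcat σx σt a b₁ a b₂

section Aux
variable {d : ℕ}

noncomputable def ker (σx σt : ℝ) (f f' g g' : ℝ → EuclideanSpace ℝ (Fin d)) (s t : ℝ) : ℝ :=
  Real.exp (-‖f s - g t‖ ^ 2 / σx ^ 2) * Real.exp (-‖f' s - g' t‖ ^ 2 / σt ^ 2)

lemma vprod_eq (σx σt L₁ L₂ : ℝ) (f f' g g' : ℝ → EuclideanSpace ℝ (Fin d)) :
    vprod d σx σt L₁ L₂ f f' g g' =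
      ∫ s in (0:ℝ)..L₁, ∫ t in (0:ℝ)..L₂, ker σx σt f f' g g' s t := rfl

lemma ker_pos (σx σt : ℝ) (f f' g g' : ℝ → EuclideanSpace ℝ (Fin d)) (s t : ℝ) :
    0 < ker σx σt f f' g g' s t := mul_pos (Real.exp_pos _) (Real.exp_pos _)

lemma exp_term_le_one (σ : ℝ) (x : EuclideanSpace ℝ (Fin d)) :
    Real.exp (-‖x‖ ^ 2 / σ ^ 2) ≤ 1 := by
  rw [Real.exp_le_one_iff]
  apply div_nonpos_of_nonpos_of_nonneg (neg_nonpos.mpr (by positivity)) (sq_nonneg _)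

lemma ker_le_one (σx σt : ℝ) (f f' g g' : ℝ → EuclideanSpace ℝ (Fin d)) (s t : ℝ) :
    ker σx σt f f' g g' s t ≤ 1 :=
  mul_le_one₀ (exp_term_le_one _ _) (Real.exp_pos _).le (exp_term_le_one _ _)

lemma ker_le_snd (σx σt : ℝ) (f f' g g' : ℝ → EuclideanSpace ℝ (Fin d)) (s t : ℝ) :
    ker σx σt f f' g g' s t ≤ Real.exp (-‖f' s - g' t‖ ^ 2 / σt ^ 2) :=
  mul_le_of_le_one_left (Real.exp_pos _).le (exp_term_le_one _ _)

lemma ker_continuous {σx σt : ℝ} {f f' g g' : ℝ → EuclideanSpace ℝ (Fin d)}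
    (hf : Continuous f) (hf' : Continuous f') (hg : Continuous g) (hg' : Continuous g') :
    Continuous (fun p : ℝ × ℝ => ker σx σt f f' g g' p.1 p.2) := by
  unfold ker; fun_prop

noncomputable def clamp {d : ℕ} (L : ℝ) (f : ℝ → EuclideanSpace ℝ (Fin d)) :
    ℝ → EuclideanSpace ℝ (Fin d) := fun s => f (min (max s 0) L)

lemma clamp_continuous {L : ℝ} (hL : 0 ≤ L) {f : ℝ → EuclideanSpace ℝ (Fin d)}
    (hf : ContinuousOn f (Icc 0 L)) : Continuous (clamp L f) := by
  apply hf.comp_continuous (by fun_prop)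
  intro x
  exact ⟨le_min (le_max_right _ _) hL, min_le_right _ _⟩

lemma clamp_eq {L : ℝ} {f : ℝ → EuclideanSpace ℝ (Fin d)} {s : ℝ} (hs : s ∈ Icc 0 L) :
    clamp L f s = f s := by
  unfold clamp
  rw [max_eq_left hs.1, min_eq_left hs.2]

end Aux

section Aux2
variable {d : ℕ}

lemma cont_section {k : ℝ → ℝ → ℝ} (hk : Continuous (fun p : ℝ × ℝ => k p.1 p.2)) (s : ℝ) :
    Continuous (k s) := by
  have : k s = (fun p : ℝ × ℝ => k p.1 p.2) ∘ (fun t => (s, t)) := rfl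
  rw [this]; fun_prop

lemma inner_cont {k : ℝ → ℝ → ℝ} (hk : Continuous (fun p : ℝ × ℝ => k p.1 p.2))
    (a b : ℝ) : Continuous (fun s => ∫ t in a..b, k s t) :=
  intervalIntegral.continuous_parametric_intervalIntegral_of_continuous' hk a b

lemma swap_interval {k : ℝ → ℝ → ℝ} (hk : Continuous (fun p : ℝ × ℝ => k p.1 p.2))
    {L₁ L₂ : ℝ} (h₁ : 0 ≤ L₁) (h₂ : 0 ≤ L₂) :
    ∫ s in (0:ℝ)..L₁, ∫ t in (0:ℝ)..L₂, k s t
      = ∫ t in (0:ℝ)..L₂, ∫ s in (0:ℝ)..L₁, k s t := by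
  rw [intervalIntegral.integral_of_le h₁, intervalIntegral.integral_of_le h₂]
  simp_rw [intervalIntegral.integral_of_le h₂, intervalIntegral.integral_of_le h₁]
  apply MeasureTheory.integral_integral_swap
  rw [Measure.prod_restrict]
  have hcomp : IsCompact (Icc (0:ℝ) L₁ ×ˢ Icc (0:ℝ) L₂) := isCompact_Icc.prod isCompact_Icc
  have : IntegrableOn (fun p : ℝ × ℝ => k p.1 p.2) (Icc (0:ℝ) L₁ ×ˢ Icc (0:ℝ) L₂)
      (volume.prod volume) := by
    rw [← Measure.volume_eq_prod]
    exact hk.continuousOn.integrableOn_compact hcomp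
  exact this.mono_set (prod_mono Ioc_subset_Icc_self Ioc_subset_Icc_self)

lemma vprod_congr {σx σt L₁ L₂ : ℝ} (h₁ : 0 ≤ L₁) (h₂ : 0 ≤ L₂)
    {f f' g g' F F' G G' : ℝ → EuclideanSpace ℝ (Fin d)}
    (hf : EqOn f F (Icc 0 L₁)) (hf' : EqOn f' F' (Icc 0 L₁))
    (hg : EqOn g G (Icc 0 L₂)) (hg' : EqOn g' G' (Icc 0 L₂)) :
    vprod d σx σt L₁ L₂ f f' g g' = vprod d σx σt L₁ L₂ F F' G G' := by
  unfold vprod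
  apply intervalIntegral.integral_congr
  intro s hs
  rw [uIcc_of_le h₁] at hs
  apply intervalIntegral.integral_congr
  intro t ht
  rw [uIcc_of_le h₂] at ht
  simp only [hf hs, hf' hs, hg ht, hg' ht]

lemma vprod_symm {σx σt L₁ L₂ : ℝ} (h₁ : 0 ≤ L₁) (h₂ : 0 ≤ L₂)
    {f f' g g' : ℝ → EuclideanSpace ℝ (Fin d)}
    (hf : Continuous f) (hf' : Continuous f') (hg : Continuous g) (hg' : Continuous g') :
    vprod d σx σt L₁ L₂ f f' g g' = vprod d σx σt L₂ L₁ g g' f f' := by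
  rw [vprod_eq, vprod_eq, swap_interval (ker_continuous hf hf' hg hg') h₁ h₂]
  have hker : ∀ s t : ℝ, ker σx σt g g' f f' t s = ker σx σt f f' g g' s t := by
    intro s t; unfold ker; rw [norm_sub_rev (g t) (f s), norm_sub_rev (g' t) (f' s)]
  simp_rw [hker]

lemma vprod_nonneg {σx σt L₁ L₂ : ℝ} (h₁ : 0 ≤ L₁) (h₂ : 0 ≤ L₂)
    (f f' g g' : ℝ → EuclideanSpace ℝ (Fin d)) :
    0 ≤ vprod d σx σt L₁ L₂ f f' g g' := by
  apply intervalIntegral.integral_nonneg h₁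
  intro s _
  apply intervalIntegral.integral_nonneg h₂
  intro t _
  exact (ker_pos σx σt f f' g g' s t).le

end Aux2

section Aux3
variable {d : ℕ}

lemma concat_eq_left {L₀ : ℝ} {f g : ℝ → EuclideanSpace ℝ (Fin d)} {s : ℝ} (h : s ≤ L₀) :
    concat L₀ f g s = f s := if_pos h

lemma concat_eq_right {L₀ : ℝ} {f g : ℝ → EuclideanSpace ℝ (Fin d)} {s : ℝ} (h : ¬ s ≤ L₀) :
    concat L₀ f g s = g (s - L₀) := if_neg h

lemma concat_continuous {L₀ : ℝ} {f g : ℝ → EuclideanSpace ℝ (Fin d)}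
    (hf : Continuous f) (hg : Continuous g) (hj : f L₀ = g 0) :
    Continuous (concat L₀ f g) := by
  unfold concat
  apply Continuous.if_le hf (hg.comp (continuous_id.sub continuous_const))
    continuous_id continuous_const
  intro x hx
  simp only [id_eq] at hx
  subst hx
  simp [hj]

lemma concat_shift_eqOn {σx σt : ℝ} {Lh Li : ℝ} (hLi : 0 ≤ Li)
    {F F' h h' i i' : ℝ → EuclideanSpace ℝ (Fin d)}
    (ji : h Lh = i 0) (ji' : h' Lh = i' 0) (s : ℝ) :
    EqOn (fun t => ker σx σt F F' (concat Lh h i) (concat Lh h' i') s (t + Lh))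
      (fun t => ker σx σt F F' i i' s t) (uIcc 0 Li) := by
  intro t ht
  rw [uIcc_of_le hLi] at ht
  rcases eq_or_lt_of_le ht.1 with h0 | h0
  · subst h0
    simp only [zero_add]
    unfold ker
    rw [concat_eq_left le_rfl, concat_eq_left le_rfl, ji, ji']
  · have hnle : ¬ (t + Lh ≤ Lh) := by linarith
    simp only [ker]
    rw [concat_eq_right hnle, concat_eq_right hnle, add_sub_cancel_right]

set_option maxHeartbeats 1000000 in
lemma vprod_concat_split (σx σt : ℝ) {Lf Lg Lh Li : ℝ}
    (hLf : 0 ≤ Lf) (hLg : 0 ≤ Lg) (hLh : 0 ≤ Lh) (hLi : 0 ≤ Li)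
    {f f' g g' h h' i i' : ℝ → EuclideanSpace ℝ (Fin d)}
    (cf : Continuous f) (cf' : Continuous f') (cg : Continuous g) (cg' : Continuous g')
    (ch : Continuous h) (ch' : Continuous h') (ci : Continuous i) (ci' : Continuous i')
    (jg : f Lf = g 0) (jg' : f' Lf = g' 0) (ji : h Lh = i 0) (ji' : h' Lh = i' 0) :
    vprod d σx σt (Lf + Lg) (Lh + Li)
        (concat Lf f g) (concat Lf f' g') (concat Lh h i) (concat Lh h' i') =
      vprod d σx σt Lf Lh f f' h h' + vprod d σx σt Lf Li f f' i i' +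
      vprod d σx σt Lg Lh g g' h h' + vprod d σx σt Lg Li g g' i i' := by
  set F := concat Lf f g with hF
  set F' := concat Lf f' g' with hF'
  set H := concat Lh h i with hH
  set H' := concat Lh h' i' with hH'
  have cF : Continuous F := concat_continuous cf cg jg
  have cF' : Continuous F' := concat_continuous cf' cg' jg'
  have cH : Continuous H := concat_continuous ch ci ji
  have cH' : Continuous H' := concat_continuous ch' ci' ji'
  -- inner splitting
  have inner_split : ∀ s : ℝ,
      (∫ t in (0:ℝ)..(Lh + Li), ker σx σt F F' H H' s t)
        = (∫ t in (0:ℝ)..Lh, ker σx σt F F' h h' s t)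
          + ∫ t in (0:ℝ)..Li, ker σx σt F F' i i' s t := by
    intro s
    have kcont := ker_continuous (σx := σx) (σt := σt) cF cF' cH cH'
    have i1 : IntervalIntegrable (fun t => ker σx σt F F' H H' s t) volume 0 Lh :=
      (cont_section kcont s).intervalIntegrable _ _
    have i2 : IntervalIntegrable (fun t => ker σx σt F F' H H' s t) volume Lh (Lh + Li) :=
      (cont_section kcont s).intervalIntegrable _ _
    rw [← intervalIntegral.integral_add_adjacent_intervals i1 i2]
    congr 1
    · apply intervalIntegral.integral_congr
      intro t ht
      rw [uIcc_of_le hLh] at ht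
      simp only [ker, hH, hH']
      rw [concat_eq_left ht.2, concat_eq_left ht.2]
    · have hcomp := intervalIntegral.integral_comp_add_right
        (a := (0:ℝ)) (b := Li) (fun t => ker σx σt F F' H H' s t) Lh
      rw [zero_add, add_comm Li Lh] at hcomp
      rw [← hcomp]
      exact intervalIntegral.integral_congr (concat_shift_eqOn hLi ji ji' s)
  -- now outer
  rw [vprod_eq]
  simp_rw [inner_split]
  have ih : Continuous (fun s => ∫ t in (0:ℝ)..Lh, ker σx σt F F' h h' s t) :=
    inner_cont (ker_continuous cF cF' ch ch') _ _
  have ii : Continuous (fun s => ∫ t in (0:ℝ)..Li, ker σx σt F F' i i' s t) :=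
    inner_cont (ker_continuous cF cF' ci ci') _ _
  rw [intervalIntegral.integral_add (ih.intervalIntegrable _ _) (ii.intervalIntegrable _ _)]
  have outer_split : ∀ (Lj : ℝ) (j j' : ℝ → EuclideanSpace ℝ (Fin d)),
      Continuous j → Continuous j' →
      (∫ s in (0:ℝ)..(Lf + Lg), ∫ t in (0:ℝ)..Lj, ker σx σt F F' j j' s t)
        = (∫ s in (0:ℝ)..Lf, ∫ t in (0:ℝ)..Lj, ker σx σt f f' j j' s t)
          + ∫ s in (0:ℝ)..Lg, ∫ t in (0:ℝ)..Lj, ker σx σt g g' j j' s t := by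
    intro Lj j j' cj cj'
    have icont : Continuous (fun s => ∫ t in (0:ℝ)..Lj, ker σx σt F F' j j' s t) :=
      inner_cont (ker_continuous cF cF' cj cj') _ _
    rw [← intervalIntegral.integral_add_adjacent_intervals
      (icont.intervalIntegrable 0 Lf) (icont.intervalIntegrable Lf (Lf + Lg))]
    congr 1
    · apply intervalIntegral.integral_congr
      intro s hs
      rw [uIcc_of_le hLf] at hs
      apply intervalIntegral.integral_congr
      intro t _
      simp only [ker, hF, hF']
      rw [concat_eq_left hs.2, concat_eq_left hs.2]
    · have hcomp := intervalIntegral.integral_comp_add_right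
        (a := (0:ℝ)) (b := Lg) (fun s => ∫ t in (0:ℝ)..Lj, ker σx σt F F' j j' s t) Lf
      rw [zero_add, add_comm Lg Lf] at hcomp
      rw [← hcomp]
      apply intervalIntegral.integral_congr
      intro s hs
      rw [uIcc_of_le hLg] at hs
      apply intervalIntegral.integral_congr
      intro t _
      rcases eq_or_lt_of_le hs.1 with h0 | h0
      · simp only [← h0, zero_add, ker, hF, hF']
        rw [concat_eq_left le_rfl, concat_eq_left le_rfl, jg, jg']
      · have hnle : ¬ (s + Lf ≤ Lf) := by linarith
        simp only [ker, hF, hF']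
        rw [concat_eq_right hnle, concat_eq_right hnle, add_sub_cancel_right]
  rw [outer_split Lh h h' ch ch', outer_split Li i i' ci ci']
  simp only [vprod_eq]
  ring

end Aux3

section Aux4
variable {d : ℕ}

noncomputable def cl (c : UnitSpeedCurve d) : ℝ → EuclideanSpace ℝ (Fin d) := clamp c.L c.γ
noncomputable def cl' (c : UnitSpeedCurve d) : ℝ → EuclideanSpace ℝ (Fin d) := clamp c.L c.γ'

lemma curve_contOn (c : UnitSpeedCurve d) : ContinuousOn c.γ (Icc 0 c.L) :=
  fun s hs => (c.hasDeriv s hs).continuousWithinAt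

lemma cl_continuous (c : UnitSpeedCurve d) : Continuous (cl c) :=
  clamp_continuous c.L_pos.le (curve_contOn c)

lemma cl'_continuous (c : UnitSpeedCurve d) : Continuous (cl' c) :=
  clamp_continuous c.L_pos.le c.contDeriv

lemma cl_eq (c : UnitSpeedCurve d) {s : ℝ} (hs : s ∈ Icc 0 c.L) : cl c s = c.γ s :=
  clamp_eq hs

lemma cl'_eq (c : UnitSpeedCurve d) {s : ℝ} (hs : s ∈ Icc 0 c.L) : cl' c s = c.γ' s :=
  clamp_eq hs

lemma V_eq_clamped (σx σt : ℝ) (c₁ c₂ : UnitSpeedCurve d) :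
    V σx σt c₁ c₂ = vprod d σx σt c₁.L c₂.L (cl c₁) (cl' c₁) (cl c₂) (cl' c₂) :=
  vprod_congr c₁.L_pos.le c₂.L_pos.le
    (fun s hs => (cl_eq c₁ hs).symm) (fun s hs => (cl'_eq c₁ hs).symm)
    (fun t ht => (cl_eq c₂ ht).symm) (fun t ht => (cl'_eq c₂ ht).symm)

lemma V_symm (σx σt : ℝ) (c₁ c₂ : UnitSpeedCurve d) : V σx σt c₁ c₂ = V σx σt c₂ c₁ := by
  rw [V_eq_clamped, V_eq_clamped]
  exact vprod_symm c₁.L_pos.le c₂.L_pos.le (cl_continuous c₁) (cl'_continuous c₁)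
    (cl_continuous c₂) (cl'_continuous c₂)

lemma concat_clamp_eqOn {L₀ Lg : ℝ} (hL₀ : 0 ≤ L₀)
    (f g : ℝ → EuclideanSpace ℝ (Fin d)) :
    EqOn (concat L₀ f g) (concat L₀ (clamp L₀ f) (clamp Lg g)) (Icc 0 (L₀ + Lg)) := by
  intro s hs
  by_cases h : s ≤ L₀
  · rw [concat_eq_left h, concat_eq_left h, clamp_eq ⟨hs.1, h⟩]
  · rw [concat_eq_right h, concat_eq_right h, clamp_eq]
    push_neg at h
    constructor
    · linarith
    · linarith [hs.2]

set_option maxHeartbeats 2000000 in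
lemma Vconcat_eq (σx σt : ℝ) (a b c e : UnitSpeedCurve d)
    (hb : b.γ 0 = a.γ a.L) (hb' : b.γ' 0 = a.γ' a.L)
    (he : e.γ 0 = c.γ c.L) (he' : e.γ' 0 = c.γ' c.L) :
    Vconcat σx σt a b c e =
      V σx σt a c + V σx σt a e + V σx σt b c + V σx σt b e := by
  unfold Vconcat
  rw [vprod_congr (by linarith [a.L_pos, b.L_pos]) (by linarith [c.L_pos, e.L_pos])
    (concat_clamp_eqOn a.L_pos.le a.γ b.γ) (concat_clamp_eqOn a.L_pos.le a.γ' b.γ')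
    (concat_clamp_eqOn c.L_pos.le c.γ e.γ) (concat_clamp_eqOn c.L_pos.le c.γ' e.γ')]
  have jb : clamp a.L a.γ a.L = clamp b.L b.γ 0 := by
    rw [clamp_eq ⟨a.L_pos.le, le_refl _⟩, clamp_eq ⟨le_refl _, b.L_pos.le⟩, hb]
  have jb' : clamp a.L a.γ' a.L = clamp b.L b.γ' 0 := by
    rw [clamp_eq ⟨a.L_pos.le, le_refl _⟩, clamp_eq ⟨le_refl _, b.L_pos.le⟩, hb']
  have je : clamp c.L c.γ c.L = clamp e.L e.γ 0 := by
    rw [clamp_eq ⟨c.L_pos.le, le_refl _⟩, clamp_eq ⟨le_refl _, e.L_pos.le⟩, he]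
  have je' : clamp c.L c.γ' c.L = clamp e.L e.γ' 0 := by
    rw [clamp_eq ⟨c.L_pos.le, le_refl _⟩, clamp_eq ⟨le_refl _, e.L_pos.le⟩, he']
  rw [vprod_concat_split σx σt a.L_pos.le b.L_pos.le c.L_pos.le e.L_pos.le
    (clamp_continuous a.L_pos.le (curve_contOn a)) (clamp_continuous a.L_pos.le a.contDeriv)
    (clamp_continuous b.L_pos.le (curve_contOn b)) (clamp_continuous b.L_pos.le b.contDeriv)
    (clamp_continuous c.L_pos.le (curve_contOn c)) (clamp_continuous c.L_pos.le c.contDeriv)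
    (clamp_continuous e.L_pos.le (curve_contOn e)) (clamp_continuous e.L_pos.le e.contDeriv)
    jb jb' je je']
  congr 1
  · congr 1
    · congr 1
      · unfold V
        exact (vprod_congr a.L_pos.le c.L_pos.le
          (fun s hs => (clamp_eq hs).symm) (fun s hs => (clamp_eq hs).symm)
          (fun t ht => (clamp_eq ht).symm) (fun t ht => (clamp_eq ht).symm)).symm
      · unfold V
        exact (vprod_congr a.L_pos.le e.L_pos.le
          (fun s hs => (clamp_eq hs).symm) (fun s hs => (clamp_eq hs).symm)
          (fun t ht => (clamp_eq ht).symm) (fun t ht => (clamp_eq ht).symm)).symm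
    · unfold V
      exact (vprod_congr b.L_pos.le c.L_pos.le
        (fun s hs => (clamp_eq hs).symm) (fun s hs => (clamp_eq hs).symm)
        (fun t ht => (clamp_eq ht).symm) (fun t ht => (clamp_eq ht).symm)).symm
  · unfold V
    exact (vprod_congr b.L_pos.le e.L_pos.le
      (fun s hs => (clamp_eq hs).symm) (fun s hs => (clamp_eq hs).symm)
      (fun t ht => (clamp_eq ht).symm) (fun t ht => (clamp_eq ht).symm)).symm

lemma deltaConcat_eq (σx σt : ℝ) (a b₁ b₂ : UnitSpeedCurve d)
    (hpt₁ : b₁.γ 0 = a.γ a.L) (hpt₂ : b₂.γ 0 = a.γ a.L)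
    (hdir₁ : b₁.γ' 0 = a.γ' a.L) (hdir₂ : b₂.γ' 0 = a.γ' a.L) :
    deltaConcat σx σt a b₁ b₂ =
      V σx σt b₁ b₁ + V σx σt b₂ b₂ - 2 * V σx σt b₁ b₂ := by
  unfold deltaConcat
  rw [Vconcat_eq σx σt a b₁ a b₁ hpt₁ hdir₁ hpt₁ hdir₁,
    Vconcat_eq σx σt a b₂ a b₂ hpt₂ hdir₂ hpt₂ hdir₂,
    Vconcat_eq σx σt a b₁ a b₂ hpt₁ hdir₁ hpt₂ hdir₂,
    V_symm σx σt a b₁, V_symm σx σt a b₂]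
  ring

end Aux4

section Aux5
variable {d : ℕ}

lemma curve_dist_le (c : UnitSpeedCurve d) {s t : ℝ} (hs : s ∈ Icc 0 c.L) (ht : t ∈ Icc 0 c.L) :
    ‖c.γ s - c.γ t‖ ≤ |s - t| := by
  have := Convex.norm_image_sub_le_of_norm_hasDerivWithin_le
    c.hasDeriv (fun x hx => le_of_eq (c.unitSpeed x hx)) (convex_Icc _ _) ht hs
  simpa [Real.norm_eq_abs] using this

lemma V_self_lower (σx σt : ℝ) (hσx : 0 < σx) (hσt : 0 < σt) (b : UnitSpeedCurve d)
    {K : ℝ} (hK : 0 < K)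
    (hlipK : ∀ s ∈ Icc (0:ℝ) b.L, ∀ t ∈ Icc (0:ℝ) b.L, ‖b.γ' s - b.γ' t‖ ≤ K * |s - t|) :
    Real.exp (-2) * (b.L / 2) * min (min σx (σt / K)) (b.L / 2) ≤ V σx σt b b := by
  have hL : 0 < b.L := b.L_pos
  set L := b.L with hLdef
  set η := min (min σx (σt / K)) (L / 2) with hηdef
  have hη0 : 0 < η := lt_min (lt_min hσx (div_pos hσt hK)) (by linarith)
  have hησx : η ≤ σx := le_trans (min_le_left _ _) (min_le_left _ _)
  have hησt : η ≤ σt / K := le_trans (min_le_left _ _) (min_le_right _ _)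
  have hηL : η ≤ L / 2 := min_le_right _ _
  set G := cl b with hGdef
  set G' := cl' b with hG'def
  have cG : Continuous G := cl_continuous b
  have cG' : Continuous G' := cl'_continuous b
  have kc := ker_continuous (σx := σx) (σt := σt) cG cG' cG cG'
  have hker_ge : ∀ s ∈ Icc (0:ℝ) (L/2), ∀ t ∈ Icc s (s + η),
      Real.exp (-2) ≤ ker σx σt G G' G G' s t := by
    intro s hs t ht
    have hsI : s ∈ Icc (0:ℝ) L := ⟨hs.1, by linarith [hs.2]⟩
    have htI : t ∈ Icc (0:ℝ) L := ⟨le_trans hs.1 ht.1, by linarith [ht.2, hs.2, hηL]⟩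
    have habs : |s - t| ≤ η := by
      rw [abs_sub_comm, abs_of_nonneg (by linarith [ht.1])]
      linarith [ht.2]
    have hx1 : ‖G s - G t‖ ≤ σx := by
      rw [hGdef, cl_eq b hsI, cl_eq b htI]
      exact le_trans (curve_dist_le b hsI htI) (le_trans habs hησx)
    have hx2 : ‖G' s - G' t‖ ≤ σt := by
      rw [hG'def, cl'_eq b hsI, cl'_eq b htI]
      refine le_trans (hlipK s hsI t htI) ?_
      calc K * |s - t| ≤ K * η := by nlinarith
        _ ≤ σt := by have := (le_div_iff₀ hK).mp hησt; linarith
    have e1 : Real.exp (-1) ≤ Real.exp (-‖G s - G t‖ ^ 2 / σx ^ 2) := by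
      apply Real.exp_le_exp.mpr
      rw [neg_div, neg_le_neg_iff]
      rw [div_le_one (by positivity)]
      exact pow_le_pow_left₀ (norm_nonneg _) hx1 2
    have e2 : Real.exp (-1) ≤ Real.exp (-‖G' s - G' t‖ ^ 2 / σt ^ 2) := by
      apply Real.exp_le_exp.mpr
      rw [neg_div, neg_le_neg_iff]
      rw [div_le_one (by positivity)]
      exact pow_le_pow_left₀ (norm_nonneg _) hx2 2
    have : Real.exp (-2) = Real.exp (-1) * Real.exp (-1) := by
      rw [← Real.exp_add]; norm_num
    rw [this]
    exact mul_le_mul e1 e2 (Real.exp_pos _).le (Real.exp_pos _).le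
  have key : ∀ s ∈ Icc (0:ℝ) (L/2),
      Real.exp (-2) * η ≤ ∫ t in (0:ℝ)..L, ker σx σt G G' G G' s t := by
    intro s hs
    have ii : ∀ u v : ℝ, IntervalIntegrable (fun t => ker σx σt G G' G G' s t) volume u v :=
      fun u v => (cont_section kc s).intervalIntegrable u v
    have e1 := intervalIntegral.integral_add_adjacent_intervals (ii 0 (s+η)) (ii (s+η) L)
    have e2 := intervalIntegral.integral_add_adjacent_intervals (ii 0 s) (ii s (s+η))
    have hmid : Real.exp (-2) * η ≤ ∫ t in s..(s+η), ker σx σt G G' G G' s t := by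
      have hmono := intervalIntegral.integral_mono_on (by linarith : s ≤ s + η)
        intervalIntegrable_const (ii s (s+η)) (hker_ge s hs)
      simpa [intervalIntegral.integral_const, smul_eq_mul, mul_comm] using hmono
    have hpos1 : 0 ≤ ∫ t in (0:ℝ)..s, ker σx σt G G' G G' s t :=
      intervalIntegral.integral_nonneg hs.1 (fun u _ => (ker_pos _ _ _ _ _ _ _ _).le)
    have hpos2 : 0 ≤ ∫ t in (s+η)..L, ker σx σt G G' G G' s t :=
      intervalIntegral.integral_nonneg (by linarith [hs.2]) (fun u _ => (ker_pos _ _ _ _ _ _ _ _).le)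
    rw [← e1, ← e2]
    linarith
  rw [V_eq_clamped, vprod_eq]
  show Real.exp (-2) * (L / 2) * η ≤ ∫ s in (0:ℝ)..L, ∫ t in (0:ℝ)..L, ker σx σt G G' G G' s t
  have icont : Continuous (fun s => ∫ t in (0:ℝ)..L, ker σx σt G G' G G' s t) :=
    inner_cont kc 0 L
  have e3 := intervalIntegral.integral_add_adjacent_intervals
    (icont.intervalIntegrable (μ := volume) 0 (L/2)) (icont.intervalIntegrable (μ := volume) (L/2) L)
  have houter : ∫ s in (0:ℝ)..(L/2), (Real.exp (-2) * η)
      ≤ ∫ s in (0:ℝ)..(L/2), ∫ t in (0:ℝ)..L, ker σx σt G G' G G' s t :=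
    intervalIntegral.integral_mono_on (by linarith)
      intervalIntegrable_const (icont.intervalIntegrable _ _) key
  have hpos3 : 0 ≤ ∫ s in (L/2)..L, ∫ t in (0:ℝ)..L, ker σx σt G G' G G' s t :=
    intervalIntegral.integral_nonneg (by linarith)
      (fun s _ => intervalIntegral.integral_nonneg (by linarith)
        (fun t _ => (ker_pos _ _ _ _ _ _ _ _).le))
  rw [intervalIntegral.integral_const, smul_eq_mul, sub_zero] at houter
  rw [← e3]
  calc Real.exp (-2) * (L / 2) * η = L / 2 * (Real.exp (-2) * η) := by ring
    _ ≤ _ := by linarith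

lemma V_cross_upper (σx σt : ℝ) (b₁ b₂ : UnitSpeedCurve d) (r ρ : ℝ)
    (hr0 : 0 < r) (hr1 : r ≤ b₁.L) (hr2 : r ≤ b₂.L) (hρ : 0 ≤ ρ)
    (hlow : ∀ s ∈ Icc (0:ℝ) b₁.L, ∀ t ∈ Icc (0:ℝ) b₂.L, r ≤ max s t →
      ρ ≤ ‖b₁.γ' s - b₂.γ' t‖) :
    V σx σt b₁ b₂ ≤ r ^ 2 + b₁.L * b₂.L * Real.exp (-ρ ^ 2 / σt ^ 2) := by
  set L₁ := b₁.L with hL₁def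
  set L₂ := b₂.L with hL₂def
  set Ebd := Real.exp (-ρ ^ 2 / σt ^ 2) with hEbd
  have hE0 : 0 < Ebd := Real.exp_pos _
  set G₁ := cl b₁ with hG₁def
  set G₁' := cl' b₁ with hG₁'def
  set G₂ := cl b₂ with hG₂def
  set G₂' := cl' b₂ with hG₂'def
  have kc := ker_continuous (σx := σx) (σt := σt) (cl_continuous b₁) (cl'_continuous b₁)
    (cl_continuous b₂) (cl'_continuous b₂)
  have hbd : ∀ s ∈ Icc (0:ℝ) L₁, ∀ t ∈ Icc (0:ℝ) L₂, r ≤ max s t →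
      ker σx σt G₁ G₁' G₂ G₂' s t ≤ Ebd := by
    intro s hs t ht hm
    refine le_trans (ker_le_snd σx σt G₁ G₁' G₂ G₂' s t) ?_
    rw [hG₁'def, hG₂'def, cl'_eq b₁ hs, cl'_eq b₂ ht]
    apply Real.exp_le_exp.mpr
    rw [neg_div, neg_div, neg_le_neg_iff]
    gcongr
    exact hlow s hs t ht hm
  have innerA : ∀ s ∈ Icc (0:ℝ) L₁,
      (∫ t in (0:ℝ)..L₂, ker σx σt G₁ G₁' G₂ G₂' s t) ≤ r + L₂ * Ebd := by
    intro s hs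
    have ii : ∀ u v : ℝ, IntervalIntegrable (fun t => ker σx σt G₁ G₁' G₂ G₂' s t) volume u v :=
      fun u v => (cont_section kc s).intervalIntegrable u v
    rw [← intervalIntegral.integral_add_adjacent_intervals (ii 0 r) (ii r L₂)]
    have p1 : (∫ t in (0:ℝ)..r, ker σx σt G₁ G₁' G₂ G₂' s t) ≤ ∫ t in (0:ℝ)..r, (1:ℝ) :=
      intervalIntegral.integral_mono_on hr0.le (ii _ _) intervalIntegrable_const
        (fun t _ => ker_le_one _ _ _ _ _ _ _ _)
    have p2 : (∫ t in r..L₂, ker σx σt G₁ G₁' G₂ G₂' s t) ≤ ∫ t in r..L₂, Ebd :=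
      intervalIntegral.integral_mono_on hr2 (ii _ _) intervalIntegrable_const
        (fun t ht' => hbd s hs t ⟨le_trans hr0.le ht'.1, ht'.2⟩ (le_max_iff.mpr (Or.inr ht'.1)))
    rw [intervalIntegral.integral_const, smul_eq_mul, sub_zero, mul_one] at p1
    rw [intervalIntegral.integral_const, smul_eq_mul] at p2
    nlinarith [hE0.le]
  have innerB : ∀ s ∈ Icc r L₁,
      (∫ t in (0:ℝ)..L₂, ker σx σt G₁ G₁' G₂ G₂' s t) ≤ L₂ * Ebd := by
    intro s hs
    have hsO : s ∈ Icc (0:ℝ) L₁ := ⟨le_trans hr0.le hs.1, hs.2⟩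
    have ii : ∀ u v : ℝ, IntervalIntegrable (fun t => ker σx σt G₁ G₁' G₂ G₂' s t) volume u v :=
      fun u v => (cont_section kc s).intervalIntegrable u v
    have hmono := intervalIntegral.integral_mono_on b₂.L_pos.le (ii _ _) intervalIntegrable_const
      (fun t ht => hbd s hsO t ht (le_max_iff.mpr (Or.inl hs.1)))
    rw [intervalIntegral.integral_const, smul_eq_mul, sub_zero] at hmono
    exact hmono
  rw [V_eq_clamped, vprod_eq]
  show (∫ s in (0:ℝ)..L₁, ∫ t in (0:ℝ)..L₂, ker σx σt G₁ G₁' G₂ G₂' s t) ≤ r ^ 2 + L₁ * L₂ * Ebd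
  have icont : Continuous (fun s => ∫ t in (0:ℝ)..L₂, ker σx σt G₁ G₁' G₂ G₂' s t) :=
    inner_cont kc 0 L₂
  rw [← intervalIntegral.integral_add_adjacent_intervals
    (icont.intervalIntegrable 0 r) (icont.intervalIntegrable r L₁)]
  have q1 : (∫ s in (0:ℝ)..r, ∫ t in (0:ℝ)..L₂, ker σx σt G₁ G₁' G₂ G₂' s t)
      ≤ ∫ s in (0:ℝ)..r, (r + L₂ * Ebd) :=
    intervalIntegral.integral_mono_on hr0.le (icont.intervalIntegrable _ _)
      intervalIntegrable_const (fun s hsr => innerA s ⟨hsr.1, hsr.2.trans hr1⟩)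
  have q2 : (∫ s in r..L₁, ∫ t in (0:ℝ)..L₂, ker σx σt G₁ G₁' G₂ G₂' s t)
      ≤ ∫ s in r..L₁, (L₂ * Ebd) :=
    intervalIntegral.integral_mono_on hr1 (icont.intervalIntegrable _ _)
      intervalIntegrable_const innerB
  rw [intervalIntegral.integral_const, smul_eq_mul, sub_zero] at q1
  rw [intervalIntegral.integral_const, smul_eq_mul] at q2
  nlinarith [hE0.le, hr0.le, b₂.L_pos.le]

lemma exp_neg_le_pow {v : ℝ} (hv : 0 < v) (m : ℕ) (hm : 0 < m) :
    Real.exp (-v) ≤ ((m : ℝ) / v) ^ m := by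
  have hm' : (0:ℝ) < m := Nat.cast_pos.mpr hm
  have h1 : (v / m) ^ m ≤ Real.exp v := by
    calc (v / m) ^ m ≤ (Real.exp (v / m)) ^ m := by
          apply pow_le_pow_left₀ (by positivity)
          linarith [Real.add_one_le_exp (v / m)]
      _ = Real.exp (v / m * m) := by
          rw [mul_comm, Real.exp_nat_mul]
      _ = Real.exp v := by congr 1; field_simp
  rw [Real.exp_neg, show ((m:ℝ) / v) ^ m = ((v / m) ^ m)⁻¹ by rw [← inv_pow, inv_div]]
  exact inv_anti₀ (by positivity) h1

end Aux5


set_option maxHeartbeats 1000000 in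
/-- For a unit-speed curve `α` and branching unit-speed curves `β₁, β₂` (with Lipschitz
derivatives, satisfying Assumptions 2 and 3) emanating from the endpoint of `α`, the
squared varifold distance `Δ(α⊕β₁, α⊕β₂)` is asymptotically equivalent to
`V(β₁,β₁) + V(β₂,β₂)` as `σx, σt → 0` with `σx ≍ σt`. -/
theorem deltaConcat_branching_asymptotic {d : ℕ} (a b₁ b₂ : UnitSpeedCurve d)
    (hlip₁ : ∃ K : NNReal, LipschitzOnWith K b₁.γ' (Set.Icc 0 b₁.L))
    (hlip₂ : ∃ K : NNReal, LipschitzOnWith K b₂.γ' (Set.Icc 0 b₂.L))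
    (hpt₁ : b₁.γ 0 = a.γ a.L) (hpt₂ : b₂.γ 0 = a.γ a.L)
    (hdir₁ : b₁.γ' 0 = a.γ' a.L) (hdir₂ : b₂.γ' 0 = a.γ' a.L)
    (hA2 : ∀ s ∈ Set.Icc (0:ℝ) b₁.L, ∀ s' ∈ Set.Icc (0:ℝ) b₁.L,
      ∀ t ∈ Set.Icc (0:ℝ) b₂.L, ∀ t' ∈ Set.Icc (0:ℝ) b₂.L,
      s + t ≤ s' + t' → ‖b₁.γ' s - b₂.γ' t‖ ≤ ‖b₁.γ' s' - b₂.γ' t'‖)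
    (hA3 : ∃ ε₀ > (0:ℝ), ∃ α ∈ Set.Ioo (0:ℝ) 2, ∀ s ∈ Set.Ioc (0:ℝ) ε₀,
      s ^ α ≤ ‖b₁.γ' s - b₁.γ' 0‖ ∧ s ^ α ≤ ‖b₂.γ' s - b₂.γ' 0‖) :
    ∀ k₁ > (0:ℝ), ∀ k₂ > (0:ℝ), ∀ ε > (0:ℝ), ∃ δ > (0:ℝ),
      ∀ σx : ℝ, 0 < σx → σx < δ → ∀ σt : ℝ, k₁ * σx ≤ σt → σt ≤ k₂ * σx →
        |deltaConcat σx σt a b₁ b₂ - V σx σt b₁ b₁ - V σx σt b₂ b₂| ≤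
          ε * (V σx σt b₁ b₁ + V σx σt b₂ b₂) := by
  intro k₁ hk₁ k₂ hk₂ ε hε
  obtain ⟨K₁, hK₁⟩ := hlip₁
  obtain ⟨ε₀, hε₀, α, hα, hA3'⟩ := hA3
  have hα0 : 0 < α := hα.1
  have hα2 : α < 2 := hα.2
  have hL₁ : 0 < b₁.L := b₁.L_pos
  have hL₂ : 0 < b₂.L := b₂.L_pos
  set L₁ := b₁.L with hL₁def
  set L₂ := b₂.L with hL₂def
  set K : ℝ := max (K₁ : ℝ) 1 with hKdef
  have hK0 : 0 < K := lt_of_lt_of_le one_pos (le_max_right _ _)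
  have hlipR : ∀ s ∈ Icc (0:ℝ) L₁, ∀ t ∈ Icc (0:ℝ) L₁,
      ‖b₁.γ' s - b₁.γ' t‖ ≤ K * |s - t| := by
    intro s hs t ht
    have h := hK₁.dist_le_mul s hs t ht
    rw [dist_eq_norm, Real.dist_eq] at h
    calc ‖b₁.γ' s - b₁.γ' t‖ ≤ (K₁:ℝ) * |s - t| := h
      _ ≤ K * |s - t| := mul_le_mul_of_nonneg_right (le_max_left _ _) (abs_nonneg _)
  set c₁ : ℝ := min 1 (k₁ / K) with hc₁def
  have hc₁0 : 0 < c₁ := lt_min one_pos (div_pos hk₁ hK0)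
  have hc₁1 : c₁ ≤ 1 := min_le_left _ _
  set c₂ : ℝ := Real.exp (-2) * (L₁ / 2) * c₁ with hc₂def
  have hc₂0 : 0 < c₂ := by positivity
  set θ : ℝ := (α + 2) / (4 * α) with hθdef
  have hθ0 : 0 < θ := div_pos (by linarith) (by linarith)
  set p : ℝ := (α + 2) / (2 * α) with hpdef
  have hp0 : 0 < p := div_pos (by linarith) (by linarith)
  have hp1 : 1 < p := by rw [hpdef, lt_div_iff₀ (by linarith)]; linarith
  have hp2θ : θ * 2 = p := by rw [hθdef, hpdef]; field_simp; ring
  set cc : ℝ := (2 - α) / 2 with hccdef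
  have hcc0 : 0 < cc := by rw [hccdef]; linarith
  have hexp_id : θ * α * 2 - 2 = -cc := by
    rw [hθdef, hccdef]; field_simp; ring
  set M : ℝ := min ε₀ (min L₁ L₂) with hMdef
  have hM0 : 0 < M := lt_min hε₀ (lt_min hL₁ hL₂)
  set m : ℕ := ⌈2 / cc⌉₊ + 1 with hmdef
  have hm0 : 0 < m := Nat.succ_pos _
  have hmcc : 2 ≤ cc * m := by
    have h2 : 2 / cc ≤ (m:ℝ) := le_trans (Nat.le_ceil _) (by exact_mod_cast Nat.le_succ _)
    rw [div_le_iff₀ hcc0] at h2; linarith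
  set A : ℝ := ε * c₂ / (4 * k₂ ^ p) with hAdef
  have hA0 : 0 < A := by
    apply div_pos (by positivity)
    have := Real.rpow_pos_of_pos hk₂ p
    linarith
  set B : ℝ := L₁ * L₂ * (m:ℝ) ^ m * k₂ ^ 2 with hBdef
  have hB0 : 0 < B := by positivity
  set δ₁ : ℝ := L₁ / (2 * c₁) with hδ₁def
  set δ₂ : ℝ := M ^ (1/θ) / k₂ with hδ₂def
  set δ₃ : ℝ := A ^ (1/(p-1)) with hδ₃def
  set δ₄ : ℝ := 1 / k₂ with hδ₄def
  set δ₅ : ℝ := ε * c₂ / (4 * B + 1) with hδ₅def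
  have hδ₁0 : 0 < δ₁ := by positivity
  have hδ₂0 : 0 < δ₂ := div_pos (Real.rpow_pos_of_pos hM0 _) hk₂
  have hδ₃0 : 0 < δ₃ := Real.rpow_pos_of_pos hA0 _
  have hδ₄0 : 0 < δ₄ := by positivity
  have hδ₅0 : 0 < δ₅ := by positivity
  refine ⟨min (min δ₁ δ₂) (min δ₃ (min δ₄ δ₅)), by positivity, ?_⟩
  intro σx hσx hσδ σt hσt1 hσt2
  have hσt0 : 0 < σt := lt_of_lt_of_le (by positivity) hσt1
  have hσδ₁ : σx < δ₁ := lt_of_lt_of_le hσδ (le_trans (min_le_left _ _) (min_le_left _ _))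
  have hσδ₂ : σx < δ₂ := lt_of_lt_of_le hσδ (le_trans (min_le_left _ _) (min_le_right _ _))
  have hσδ₃ : σx < δ₃ := lt_of_lt_of_le hσδ (le_trans (min_le_right _ _) (min_le_left _ _))
  have hσδ₄ : σx < δ₄ := lt_of_lt_of_le hσδ
    (le_trans (min_le_right _ _) (le_trans (min_le_right _ _) (min_le_left _ _)))
  have hσδ₅ : σx < δ₅ := lt_of_lt_of_le hσδ
    (le_trans (min_le_right _ _) (le_trans (min_le_right _ _) (min_le_right _ _)))
  -- identity
  have hident := deltaConcat_eq σx σt a b₁ b₂ hpt₁ hpt₂ hdir₁ hdir₂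
  have hV12nn : 0 ≤ V σx σt b₁ b₂ := vprod_nonneg hL₁.le hL₂.le _ _ _ _
  have habs : |deltaConcat σx σt a b₁ b₂ - V σx σt b₁ b₁ - V σx σt b₂ b₂|
      = 2 * V σx σt b₁ b₂ := by
    rw [hident, show V σx σt b₁ b₁ + V σx σt b₂ b₂ - 2 * V σx σt b₁ b₂
      - V σx σt b₁ b₁ - V σx σt b₂ b₂ = -(2 * V σx σt b₁ b₂) by ring, abs_neg,
      abs_of_nonneg (by linarith)]
  -- lower bound
  have hlowV := V_self_lower σx σt hσx hσt0 b₁ hK0 hlipR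
  have hc₁K : c₁ * K ≤ k₁ := by
    rw [← le_div_iff₀ hK0]; exact min_le_right _ _
  have hη_ge : c₁ * σx ≤ min (min σx (σt / K)) (L₁ / 2) := by
    apply le_min (le_min ?_ ?_) ?_
    · exact mul_le_of_le_one_left hσx.le hc₁1
    · rw [le_div_iff₀ hK0]
      calc c₁ * σx * K = (c₁ * K) * σx := by ring
        _ ≤ k₁ * σx := mul_le_mul_of_nonneg_right hc₁K hσx.le
        _ ≤ σt := hσt1
    · have h := (lt_div_iff₀ (by positivity)).mp hσδ₁
      have h2 : 2 * (c₁ * σx) = σx * (2 * c₁) := by ring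
      linarith
  have hV11 : c₂ * σx ≤ V σx σt b₁ b₁ := by
    refine le_trans ?_ hlowV
    calc c₂ * σx = Real.exp (-2) * (L₁ / 2) * (c₁ * σx) := by rw [hc₂def]; ring
      _ ≤ Real.exp (-2) * (L₁ / 2) * min (min σx (σt / K)) (L₁ / 2) :=
          mul_le_mul_of_nonneg_left hη_ge (by positivity)
  have hV22 : 0 ≤ V σx σt b₂ b₂ := vprod_nonneg hL₂.le hL₂.le _ _ _ _
  have hlower : c₂ * σx ≤ V σx σt b₁ b₁ + V σx σt b₂ b₂ := by linarith
  -- the radius r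
  set r : ℝ := σt ^ θ with hrdef
  have hr0 : 0 < r := Real.rpow_pos_of_pos hσt0 θ
  have hrM : r ≤ M := by
    have h1 : σt ≤ M ^ (1/θ) := by
      have h2 : k₂ * σx ≤ k₂ * δ₂ := mul_le_mul_of_nonneg_left hσδ₂.le hk₂.le
      have h3 : k₂ * δ₂ = M ^ (1/θ) := by rw [hδ₂def]; field_simp
      linarith
    calc r = σt ^ θ := rfl
      _ ≤ (M ^ (1/θ)) ^ θ := Real.rpow_le_rpow hσt0.le h1 hθ0.le
      _ = M := by
          rw [← Real.rpow_mul hM0.le, one_div, inv_mul_cancel₀ hθ0.ne', Real.rpow_one]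
  have hrε₀ : r ≤ ε₀ := le_trans hrM (min_le_left _ _)
  have hrL₁ : r ≤ L₁ := le_trans hrM (le_trans (min_le_right _ _) (min_le_left _ _))
  have hrL₂ : r ≤ L₂ := le_trans hrM (le_trans (min_le_right _ _) (min_le_right _ _))
  have hb20 : b₂.γ' 0 = b₁.γ' 0 := by rw [hdir₂, ← hdir₁]
  have hlowr : ∀ s ∈ Icc (0:ℝ) L₁, ∀ t ∈ Icc (0:ℝ) L₂, r ≤ max s t →
      r ^ α ≤ ‖b₁.γ' s - b₂.γ' t‖ := by
    intro s hs t ht hm'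
    rcases le_max_iff.mp hm' with hrs | hrt
    · have h1 := hA2 r ⟨hr0.le, hrL₁⟩ s hs 0 ⟨le_refl 0, hL₂.le⟩ t ht
        (by linarith [ht.1])
      have h2 := (hA3' r ⟨hr0, hrε₀⟩).1
      rw [hb20] at h1
      exact le_trans h2 h1
    · have h1 := hA2 0 ⟨le_refl 0, hL₁.le⟩ s hs r ⟨hr0.le, hrL₂⟩ t ht
        (by linarith [hs.1])
      have h2 := (hA3' r ⟨hr0, hrε₀⟩).2
      rw [hb20, norm_sub_rev] at h2
      exact le_trans h2 h1
  have hcross := V_cross_upper σx σt b₁ b₂ r (r ^ α) hr0 hrL₁ hrL₂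
    (Real.rpow_nonneg hr0.le α) hlowr
  -- estimate the r^2 term
  have hr2 : 2 * r ^ 2 ≤ ε * c₂ / 2 * σx := by
    have e1 : r ^ 2 = σt ^ p := by
      rw [hrdef, ← Real.rpow_natCast (σt ^ θ) 2, ← Real.rpow_mul hσt0.le]
      rw [show θ * ((2:ℕ):ℝ) = p by push_cast; linarith [hp2θ]]
    have e2 : σt ^ p ≤ (k₂ * σx) ^ p := Real.rpow_le_rpow hσt0.le hσt2 hp0.le
    have e3 : (k₂ * σx) ^ p = k₂ ^ p * σx ^ p := Real.mul_rpow hk₂.le hσx.le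
    have e4 : σx ^ p = σx ^ (p - 1) * σx := by
      rw [show p = (p - 1) + 1 by ring, Real.rpow_add hσx, Real.rpow_one, add_sub_cancel_right]
    have e5 : σx ^ (p - 1) ≤ A := by
      have h6 : σx ^ (p - 1) ≤ δ₃ ^ (p - 1) :=
        Real.rpow_le_rpow hσx.le hσδ₃.le (by linarith)
      have h7 : δ₃ ^ (p - 1) = A := by
        rw [hδ₃def, ← Real.rpow_mul hA0.le, one_div,
          inv_mul_cancel₀ (by linarith : p - 1 ≠ 0), Real.rpow_one]
      linarith
    have hk₂p : 0 < k₂ ^ p := Real.rpow_pos_of_pos hk₂ p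
    have e6 : 2 * (k₂ ^ p * A) = ε * c₂ / 2 := by
      rw [hAdef]; field_simp; ring
    calc 2 * r ^ 2 = 2 * σt ^ p := by rw [e1]
      _ ≤ 2 * (k₂ ^ p * (σx ^ (p-1) * σx)) := by rw [← e4, ← e3]; linarith
      _ ≤ 2 * (k₂ ^ p * (A * σx)) := by
          refine mul_le_mul_of_nonneg_left (mul_le_mul_of_nonneg_left ?_ hk₂p.le) (by norm_num)
          exact mul_le_mul_of_nonneg_right e5 hσx.le
      _ = ε * c₂ / 2 * σx := by rw [show 2 * (k₂ ^ p * (A * σx)) = 2 * (k₂ ^ p * A) * σx by ring, e6]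
  -- estimate the exponential term
  have hrpow : ((r ^ α) ^ 2 : ℝ) / σt ^ 2 = σt ^ (-cc) := by
    rw [hrdef, ← Real.rpow_mul hσt0.le θ α, ← Real.rpow_natCast (σt ^ (θ * α)) 2,
      ← Real.rpow_mul hσt0.le (θ * α) ((2:ℕ):ℝ), ← Real.rpow_natCast σt 2,
      ← Real.rpow_sub hσt0]
    rw [show θ * α * ((2:ℕ):ℝ) - ((2:ℕ):ℝ) = -cc by push_cast; linarith [hexp_id]]
  have hk₂σx0 : 0 < k₂ * σx := by positivity
  have hk₂σx1 : k₂ * σx ≤ 1 := by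
    have h := mul_lt_mul_of_pos_left hσδ₄ hk₂
    rw [hδ₄def, mul_one_div, div_self hk₂.ne'] at h
    exact h.le
  have hEbound : Real.exp (-((r ^ α) ^ 2 / σt ^ 2)) ≤ (m:ℝ) ^ m * (k₂ * σx) ^ 2 := by
    rw [hrpow]
    have hσtle : (k₂ * σx) ^ (-cc) ≤ σt ^ (-cc) :=
      Real.rpow_le_rpow_of_nonpos hσt0 hσt2 (neg_nonpos.mpr hcc0.le)
    have hv0 : 0 < (k₂ * σx) ^ (-cc) := Real.rpow_pos_of_pos hk₂σx0 _
    calc Real.exp (-(σt ^ (-cc))) ≤ Real.exp (-((k₂ * σx) ^ (-cc))) :=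
          Real.exp_le_exp.mpr (by linarith)
      _ ≤ ((m:ℝ) / ((k₂ * σx) ^ (-cc))) ^ m := exp_neg_le_pow hv0 m hm0
      _ = (m:ℝ) ^ m * ((k₂ * σx) ^ cc) ^ m := by
          rw [Real.rpow_neg hk₂σx0.le, div_eq_mul_inv, inv_inv, mul_pow]
      _ ≤ (m:ℝ) ^ m * (k₂ * σx) ^ 2 := by
          apply mul_le_mul_of_nonneg_left ?_ (by positivity)
          rw [← Real.rpow_natCast ((k₂ * σx) ^ cc) m, ← Real.rpow_mul hk₂σx0.le,
            ← Real.rpow_natCast (k₂ * σx) 2]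
          apply Real.rpow_le_rpow_of_exponent_ge hk₂σx0 hk₂σx1
          exact_mod_cast hmcc
  have hBσ : 2 * B * σx ≤ ε * c₂ / 2 := by
    have h := hσδ₅.le
    rw [hδ₅def, le_div_iff₀ (by positivity)] at h
    have h2 : 0 ≤ B * σx := by positivity
    have h3 : σx * (4 * B + 1) = 4 * (B * σx) + σx := by ring
    have h4 : 2 * B * σx = 2 * (B * σx) := by ring
    linarith
  have hexpterm : 2 * (L₁ * L₂ * Real.exp (-(r ^ α) ^ 2 / σt ^ 2)) ≤ ε * c₂ / 2 * σx := by
    have h1 : Real.exp (-(r ^ α) ^ 2 / σt ^ 2) ≤ (m:ℝ) ^ m * (k₂ * σx) ^ 2 := by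
      rw [neg_div]; exact hEbound
    calc 2 * (L₁ * L₂ * Real.exp (-(r ^ α) ^ 2 / σt ^ 2))
        ≤ 2 * (L₁ * L₂ * ((m:ℝ) ^ m * (k₂ * σx) ^ 2)) :=
          mul_le_mul_of_nonneg_left
            (mul_le_mul_of_nonneg_left h1 (mul_nonneg hL₁.le hL₂.le)) (by norm_num)
      _ = 2 * B * σx * σx := by rw [hBdef]; ring
      _ ≤ ε * c₂ / 2 * σx := mul_le_mul_of_nonneg_right hBσ hσx.le
  rw [habs]
  calc 2 * V σx σt b₁ b₂
      ≤ 2 * (r ^ 2 + L₁ * L₂ * Real.exp (-(r ^ α) ^ 2 / σt ^ 2)) := by linarith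
    _ ≤ ε * c₂ * σx := by linarith
    _ = ε * (c₂ * σx) := by ring
    _ ≤ ε * (V σx σt b₁ b₁ + V σx σt b₂ b₂) := mul_le_mul_of_nonneg_left hlower hε.le
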